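/- Module theorem for variable-disjoint programs (two-program case): let P₁ = (W₁, S₁, D₁) and P₂ = (W₂, S₂, D₂) be ASP-SAT programs with W₁ ∩ W₂ = ∅. A complete assignment π over W₁ ∪ W₂ is a stable model of (W₁∪W₂, S₁∪S₂, D₁∪D₂) iff π restricted to W₁ is a stable model of P₁ and π restricted to W₂ is a stable model of P₂. -/
import Mathlib


/-- An ASP-SAT program over variables of type `V`: a set of variables, a subset
of founded variables (the rest being standard), rules `a ← body` with founded
head `a` and a body of literals (a literal is a pair of a variable and a
polarity, `true` meaning positive), and constraints given as clauses (sets of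
literals). -/
structure Prog (V : Type*) where
  vars : Set V
  founded : Set V
  rules : Set (V × Set (V × Bool))
  constraints : Set (Set (V × Bool))

namespace Prog

variable {V : Type*}

/-- Negation of a literal. -/
def lneg (l : V × Bool) : V × Bool := (l.1, !l.2)

/-- The variables occurring in an assignment (a set of literals). -/
def avars (θ : Set (V × Bool)) : Set V := {v | (v, true) ∈ θ ∨ (v, false) ∈ θ}

/-- An assignment is consistent if no variable occurs with both polarities. -/
def Consistent (θ : Set (V × Bool)) : Prop :=
  ∀ v : V, ¬ ((v, true) ∈ θ ∧ (v, false) ∈ θ)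

/-- A set `M` satisfies a positive rule `(a, B)` iff `B ⊆ M → a ∈ M`. -/
def SatRules {W : Type*} (R : Set (W × Set W)) (M : Set W) : Prop :=
  ∀ r ∈ R, r.2 ⊆ M → r.1 ∈ M

/-- The least model of a set of positive rules. -/
def Least {W : Type*} (R : Set (W × Set W)) : Set W :=
  {v | ∀ M : Set W, SatRules R M → v ∈ M}

/-- The reduct of the rules of `P` w.r.t. an assignment `θ`: a rule is discarded
if a negatively occurring body variable is true in `θ` or a standard positive
body variable is false in `θ`; the remaining rules keep only their positive
founded body atoms. -/
def reduct (P : Prog V) (θ : Set (V × Bool)) : Set (V × Set V) :=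
  {p | ∃ body, (p.1, body) ∈ P.rules ∧
    (∀ v : V, (v, false) ∈ body → (v, true) ∉ θ) ∧
    (∀ v : V, (v, true) ∈ body → v ∉ P.founded → (v, false) ∉ θ) ∧
    p.2 = {v | v ∈ P.founded ∧ (v, true) ∈ body}}

/-- `θ` is a stable model of `P`: it is consistent, complete on `P.vars`,
satisfies every constraint, and its true founded variables are exactly the
least model of the reduct. -/
def StableModel (P : Prog V) (θ : Set (V × Bool)) : Prop :=
  Consistent θ ∧ (∀ v ∈ P.vars, (v, true) ∈ θ ∨ (v, false) ∈ θ) ∧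
  (∀ cl ∈ P.constraints, ∃ l ∈ cl, l ∈ θ) ∧
  (∀ v ∈ P.founded, ((v, true) ∈ θ ↔ v ∈ Least (P.reduct θ)))

/-- `J₀(θ)`: the negative literals of `θ` together with its positive standard
literals. -/
def J0 (P : Prog V) (θ : Set (V × Bool)) : Set (V × Bool) :=
  {l ∈ θ | l.2 = false ∨ l.1 ∉ P.founded}

/-- The residual of a set of rules w.r.t. a partial assignment `J` (treating a
rule as its clause): a rule is discarded if its head is true in `J` or some
body literal is false in `J`; otherwise the body literals fixed true by `J`
are removed. -/
def residualRules (R : Set (V × Set (V × Bool))) (J : Set (V × Bool)) :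
    Set (V × Set (V × Bool)) :=
  {p | ∃ body, (p.1, body) ∈ R ∧ (p.1, true) ∉ J ∧
    (∀ l ∈ body, lneg l ∉ J) ∧ p.2 = {l ∈ body | l ∉ J}}

/-- The residual of a set of clauses w.r.t. a partial assignment `θ`: satisfied
clauses are discarded and false literals are deleted from the rest. -/
def residualClauses (C : Set (Set (V × Bool))) (θ : Set (V × Bool)) :
    Set (Set (V × Bool)) :=
  {d | ∃ cl ∈ C, (∀ l ∈ cl, l ∉ θ) ∧ d = {l ∈ cl | lneg l ∉ θ}}

/-- The positive founded part of a set of rules: the rules whose body consists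
solely of positive founded literals, as positive rules. -/
def posPart (P : Prog V) (R : Set (V × Set (V × Bool))) : Set (V × Set V) :=
  {p | ∃ body, (p.1, body) ∈ R ∧ (∀ l ∈ body, l.2 = true ∧ l.1 ∈ P.founded) ∧
    p.2 = {v | (v, true) ∈ body}}

/-- The justified assignment `JA(P, θ)`: `J₀(θ)` together with those positive
founded literals of `θ` implied from `J₀(θ)` using the rules of `P`. -/
def JA (P : Prog V) (θ : Set (V × Bool)) : Set (V × Bool) :=
  P.J0 θ ∪ {l | l.2 = true ∧ l.1 ∈ P.founded ∧ l ∈ θ ∧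
    l.1 ∈ Least (P.posPart (residualRules P.rules (P.J0 θ)))}

/-- The variables occurring in a set of rules. -/
def ruleVars (R : Set (V × Set (V × Bool))) : Set V :=
  {v | ∃ p ∈ R, v = p.1 ∨ ∃ b : Bool, (v, b) ∈ p.2}

/-- The variables occurring in a set of clauses. -/
def clauseVars (C : Set (Set (V × Bool))) : Set V :=
  {v | ∃ cl ∈ C, ∃ b : Bool, (v, b) ∈ cl}

/-- The justified residual program `P||θ = (W, S, D)` where, with `J = JA(P,θ)`
and `U = vars(θ) \ vars(J)`, we set `S = R|_J`,
`D = C|_θ ∪ { unit clause u | u ∈ U }` and `W = vars(S) ∪ vars(D)`. -/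
def justRes (P : Prog V) (θ : Set (V × Bool)) : Prog V :=
  let J := P.JA θ
  let U := avars θ \ avars J
  let S := residualRules P.rules J
  let D := residualClauses P.constraints θ ∪ {cl | ∃ u ∈ U, cl = {((u : V), true)}}
  { vars := ruleVars S ∪ clauseVars D
    founded := P.founded ∩ (ruleVars S ∪ clauseVars D)
    rules := S
    constraints := D }

end Prog

open Prog

/-- The restriction of an assignment to a set of variables. -/
def restrict {V : Type*} (π : Set (V × Bool)) (W : Set V) : Set (V × Bool) :=
  {l ∈ π | l.1 ∈ W}

section Aux

variable {V : Type*}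

lemma satRules_least {W : Type*} (R : Set (W × Set W)) : Prog.SatRules R (Prog.Least R) := by
  intro r hr hsub M hM
  exact hM r hr (fun x hx => hsub hx M hM)

lemma least_subset_heads {W : Type*} (R : Set (W × Set W)) :
    Prog.Least R ⊆ {a | ∃ b, (a, b) ∈ R} := by
  intro v hv
  exact hv _ (fun r hr _ => ⟨r.2, hr⟩)

lemma least_union {W : Type*} {W₁ W₂ : Set W} (hd : Disjoint W₁ W₂)
    {R₁ R₂ : Set (W × Set W)}
    (hR₁ : ∀ r ∈ R₁, r.1 ∈ W₁ ∧ r.2 ⊆ W₁)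
    (hR₂ : ∀ r ∈ R₂, r.1 ∈ W₂ ∧ r.2 ⊆ W₂) :
    Prog.Least (R₁ ∪ R₂) = Prog.Least R₁ ∪ Prog.Least R₂ := by
  apply Set.Subset.antisymm
  · intro v hv
    apply hv
    rintro r (hr | hr) hsub
    · left
      apply satRules_least R₁ r hr
      intro x hx
      rcases hsub hx with h | h
      · exact h
      · exfalso
        obtain ⟨b, hb⟩ := least_subset_heads R₂ h
        exact Set.disjoint_left.mp hd ((hR₁ r hr).2 hx) ((hR₂ (x, b) hb).1)
    · right
      apply satRules_least R₂ r hr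
      intro x hx
      rcases hsub hx with h | h
      · exfalso
        obtain ⟨b, hb⟩ := least_subset_heads R₁ h
        exact Set.disjoint_left.mp hd ((hR₁ (x, b) hb).1) ((hR₂ r hr).2 hx)
      · exact h
  · rintro v (h | h) M hM
    · exact h M (fun r hr => hM r (Or.inl hr))
    · exact h M (fun r hr => hM r (Or.inr hr))

end Aux

/-- Module theorem for variable-disjoint programs (two-program case): for
ASP-SAT programs `P₁ = (W₁, S₁, D₁)` and `P₂ = (W₂, S₂, D₂)` with
`W₁ ∩ W₂ = ∅`, a complete assignment `π` over `W₁ ∪ W₂` is a stable model of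
the union program `(W₁ ∪ W₂, S₁ ∪ S₂, D₁ ∪ D₂)` iff `π` restricted to `W₁` is
a stable model of `P₁` and `π` restricted to `W₂` is a stable model of `P₂`. -/
theorem module_theorem_disjoint {V : Type*} (P₁ P₂ P : Prog V)
    (h₁ : ruleVars P₁.rules ∪ clauseVars P₁.constraints ⊆ P₁.vars)
    (h₂ : ruleVars P₂.rules ∪ clauseVars P₂.constraints ⊆ P₂.vars)
    (hf₁ : P₁.founded ⊆ P₁.vars) (hf₂ : P₂.founded ⊆ P₂.vars)
    (hdisj : Disjoint P₁.vars P₂.vars)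
    (hv : P.vars = P₁.vars ∪ P₂.vars)
    (hf : P.founded = P₁.founded ∪ P₂.founded)
    (hr : P.rules = P₁.rules ∪ P₂.rules)
    (hc : P.constraints = P₁.constraints ∪ P₂.constraints)
    (π : Set (V × Bool)) (hπv : avars π ⊆ P.vars)
    (hπcomp : ∀ v ∈ P.vars, (v, true) ∈ π ∨ (v, false) ∈ π) :
    StableModel P π ↔
      StableModel P₁ (restrict π P₁.vars) ∧ StableModel P₂ (restrict π P₂.vars) := by
  have hQf₁ : ∀ v ∈ P₁.vars, (v ∈ P.founded ↔ v ∈ P₁.founded) := by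
    intro v hw
    rw [hf]
    constructor
    · rintro (h | h)
      · exact h
      · exact absurd (hf₂ h) (Set.disjoint_left.mp hdisj hw)
    · exact Or.inl
  have hQf₂ : ∀ v ∈ P₂.vars, (v ∈ P.founded ↔ v ∈ P₂.founded) := by
    intro v hw
    rw [hf]
    constructor
    · rintro (h | h)
      · exact absurd (hf₁ h) (Set.disjoint_right.mp hdisj hw)
      · exact h
    · exact Or.inr
  have key : ∀ (Q : Prog V), ruleVars Q.rules ⊆ Q.vars →
      (∀ v ∈ Q.vars, (v ∈ P.founded ↔ v ∈ Q.founded)) →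
      ∀ (p : V × Set V) (body : Set (V × Bool)), (p.1, body) ∈ Q.rules →
      (((∀ v : V, (v, false) ∈ body → (v, true) ∉ π) ∧
        (∀ v : V, (v, true) ∈ body → v ∉ P.founded → (v, false) ∉ π) ∧
        p.2 = {v | v ∈ P.founded ∧ (v, true) ∈ body}) ↔
       ((∀ v : V, (v, false) ∈ body → (v, true) ∉ restrict π Q.vars) ∧
        (∀ v : V, (v, true) ∈ body → v ∉ Q.founded → (v, false) ∉ restrict π Q.vars) ∧
        p.2 = {v | v ∈ Q.founded ∧ (v, true) ∈ body})) := by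
    intro Q hQv hQf p body hb
    have hbv : ∀ (v : V) (b : Bool), (v, b) ∈ body → v ∈ Q.vars :=
      fun v b h => hQv ⟨(p.1, body), hb, Or.inr ⟨b, h⟩⟩
    constructor
    · rintro ⟨c1, c2, c3⟩
      refine ⟨?_, ?_, ?_⟩
      · intro v hvf hm
        exact c1 v hvf hm.1
      · intro v hvt hvnf hm
        exact c2 v hvt (fun hpf => hvnf ((hQf v (hbv v true hvt)).1 hpf)) hm.1
      · rw [c3]
        ext v
        simp only [Set.mem_setOf_eq]
        constructor
        · rintro ⟨hvf, hvt⟩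
          exact ⟨(hQf v (hbv v true hvt)).1 hvf, hvt⟩
        · rintro ⟨hvf, hvt⟩
          exact ⟨(hQf v (hbv v true hvt)).2 hvf, hvt⟩
    · rintro ⟨c1, c2, c3⟩
      refine ⟨?_, ?_, ?_⟩
      · intro v hvf hm
        exact c1 v hvf ⟨hm, hbv v false hvf⟩
      · intro v hvt hvnf hm
        exact c2 v hvt (fun hqf => hvnf ((hQf v (hbv v true hvt)).2 hqf))
          ⟨hm, hbv v true hvt⟩
      · rw [c3]
        ext v
        simp only [Set.mem_setOf_eq]
        constructor
        · rintro ⟨hvf, hvt⟩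
          exact ⟨(hQf v (hbv v true hvt)).2 hvf, hvt⟩
        · rintro ⟨hvf, hvt⟩
          exact ⟨(hQf v (hbv v true hvt)).1 hvf, hvt⟩
  have hQv₁ : ruleVars P₁.rules ⊆ P₁.vars := fun x h => h₁ (Or.inl h)
  have hQv₂ : ruleVars P₂.rules ⊆ P₂.vars := fun x h => h₂ (Or.inl h)
  have hred : P.reduct π =
      P₁.reduct (restrict π P₁.vars) ∪ P₂.reduct (restrict π P₂.vars) := by
    ext p
    constructor
    · rintro ⟨body, hb, rest⟩
      rw [hr] at hb
      rcases hb with hb | hb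
      · exact Or.inl ⟨body, hb, (key P₁ hQv₁ hQf₁ p body hb).1 rest⟩
      · exact Or.inr ⟨body, hb, (key P₂ hQv₂ hQf₂ p body hb).1 rest⟩
    · rintro (⟨body, hb, rest⟩ | ⟨body, hb, rest⟩)
      · exact ⟨body, by rw [hr]; exact Or.inl hb, (key P₁ hQv₁ hQf₁ p body hb).2 rest⟩
      · exact ⟨body, by rw [hr]; exact Or.inr hb, (key P₂ hQv₂ hQf₂ p body hb).2 rest⟩
  have hb₁ : ∀ r ∈ P₁.reduct (restrict π P₁.vars), r.1 ∈ P₁.vars ∧ r.2 ⊆ P₁.vars := by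
    rintro r ⟨body, hb, _, _, hp2⟩
    refine ⟨h₁ (Or.inl ⟨(r.1, body), hb, Or.inl rfl⟩), ?_⟩
    rw [hp2]
    rintro v ⟨hvf, _⟩
    exact hf₁ hvf
  have hb₂ : ∀ r ∈ P₂.reduct (restrict π P₂.vars), r.1 ∈ P₂.vars ∧ r.2 ⊆ P₂.vars := by
    rintro r ⟨body, hb, _, _, hp2⟩
    refine ⟨h₂ (Or.inl ⟨(r.1, body), hb, Or.inl rfl⟩), ?_⟩
    rw [hp2]
    rintro v ⟨hvf, _⟩
    exact hf₂ hvf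
  have hL : Least (P.reduct π) =
      Least (P₁.reduct (restrict π P₁.vars)) ∪ Least (P₂.reduct (restrict π P₂.vars)) := by
    rw [hred]
    exact least_union hdisj hb₁ hb₂
  have hLsub₁ : Least (P₁.reduct (restrict π P₁.vars)) ⊆ P₁.vars := by
    intro v hv
    obtain ⟨b, hb⟩ := least_subset_heads _ hv
    exact (hb₁ (v, b) hb).1
  have hLsub₂ : Least (P₂.reduct (restrict π P₂.vars)) ⊆ P₂.vars := by
    intro v hv
    obtain ⟨b, hb⟩ := least_subset_heads _ hv
    exact (hb₂ (v, b) hb).1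
  constructor
  · rintro ⟨hcons, _, hcl, hfix⟩
    refine ⟨⟨?_, ?_, ?_, ?_⟩, ⟨?_, ?_, ?_, ?_⟩⟩
    · exact fun v h => hcons v ⟨h.1.1, h.2.1⟩
    · intro v hw
      rcases hπcomp v (by rw [hv]; exact Or.inl hw) with h | h
      · exact Or.inl ⟨h, hw⟩
      · exact Or.inr ⟨h, hw⟩
    · intro cl hcl₁
      obtain ⟨l, hlcl, hlπ⟩ := hcl cl (by rw [hc]; exact Or.inl hcl₁)
      exact ⟨l, hlcl, hlπ, h₁ (Or.inr ⟨cl, hcl₁, l.2, hlcl⟩)⟩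
    · intro v hvF
      have hvW : v ∈ P₁.vars := hf₁ hvF
      have hiff := hfix v (by rw [hf]; exact Or.inl hvF)
      constructor
      · intro ht
        have hvL := hiff.1 ht.1
        rw [hL] at hvL
        rcases hvL with h | h
        · exact h
        · exact absurd (hLsub₂ h) (Set.disjoint_left.mp hdisj hvW)
      · intro hvL1
        exact ⟨hiff.2 (by rw [hL]; exact Or.inl hvL1), hvW⟩
    · exact fun v h => hcons v ⟨h.1.1, h.2.1⟩
    · intro v hw
      rcases hπcomp v (by rw [hv]; exact Or.inr hw) with h | h
      · exact Or.inl ⟨h, hw⟩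
      · exact Or.inr ⟨h, hw⟩
    · intro cl hcl₂
      obtain ⟨l, hlcl, hlπ⟩ := hcl cl (by rw [hc]; exact Or.inr hcl₂)
      exact ⟨l, hlcl, hlπ, h₂ (Or.inr ⟨cl, hcl₂, l.2, hlcl⟩)⟩
    · intro v hvF
      have hvW : v ∈ P₂.vars := hf₂ hvF
      have hiff := hfix v (by rw [hf]; exact Or.inr hvF)
      constructor
      · intro ht
        have hvL := hiff.1 ht.1
        rw [hL] at hvL
        rcases hvL with h | h
        · exact absurd (hLsub₁ h) (Set.disjoint_right.mp hdisj hvW)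
        · exact h
      · intro hvL2
        exact ⟨hiff.2 (by rw [hL]; exact Or.inr hvL2), hvW⟩
  · rintro ⟨⟨c1, _, cl1, fix1⟩, ⟨c2, _, cl2, fix2⟩⟩
    refine ⟨?_, hπcomp, ?_, ?_⟩
    · intro v hvv
      have hvW : v ∈ P.vars := hπv (Or.inl hvv.1)
      rw [hv] at hvW
      rcases hvW with h | h
      · exact c1 v ⟨⟨hvv.1, h⟩, ⟨hvv.2, h⟩⟩
      · exact c2 v ⟨⟨hvv.1, h⟩, ⟨hvv.2, h⟩⟩
    · intro cl hclm
      rw [hc] at hclm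
      rcases hclm with h | h
      · obtain ⟨l, hlcl, hlπ, _⟩ := cl1 cl h
        exact ⟨l, hlcl, hlπ⟩
      · obtain ⟨l, hlcl, hlπ, _⟩ := cl2 cl h
        exact ⟨l, hlcl, hlπ⟩
    · intro v hvF
      rw [hf] at hvF
      rcases hvF with h | h
      · have hvW := hf₁ h
        have hiff := fix1 v h
        constructor
        · intro ht
          rw [hL]
          exact Or.inl (hiff.1 ⟨ht, hvW⟩)
        · intro hvL
          rw [hL] at hvL
          rcases hvL with h' | h'
          · exact (hiff.2 h').1
          · exact absurd (hLsub₂ h') (Set.disjoint_left.mp hdisj hvW)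
      · have hvW := hf₂ h
        have hiff := fix2 v h
        constructor
        · intro ht
          rw [hL]
          exact Or.inr (hiff.1 ⟨ht, hvW⟩)
        · intro hvL
          rw [hL] at hvL
          rcases hvL with h' | h'
          · exact absurd (hLsub₁ h') (Set.disjoint_right.mp hdisj hvW)
          · exact (hiff.2 h').1
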